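/- Let Δ > 0, Λ > 0, r_l > 0, ε_f, ε_g, ε_c, ε_J ≥ 0, and let H ∈ ℝ^{n×n} be symmetric positive definite. Let (f, g, c, M) and (f̃, g̃, c̃, M̃) ∈ ℝ × ℝⁿ × ℝᵐ × ℝ^{m×n} satisfy |f̃ − f| ≤ ε_f, ‖g̃ − g‖ ≤ ε_g, ‖c̃ − c‖_∞ ≤ ε_c, ‖M̃ − M‖_∞ ≤ ε_J. Set ρ = min_{‖u‖≤Δ} ‖max{c̃ + M̃u, 0}‖_∞ and ρ̄ = min_{‖u‖≤Δ} ‖max{c + Mu, 0}‖_∞, and define p̃(d) = f̃ + g̃ᵀd + (1/2)dᵀHd + mΛ·‖max{c̃ + M̃d − ρ·1, 0}‖_∞ and p(d) = f + gᵀd + (1/2)dᵀHd + mΛ·‖max{c + Md − ρ̄·1, 0}‖_∞, where 1 ∈ ℝᵐ is the all-ones vector. If d̃ minimizes p̃ over ℝⁿ, d̄ minimizes p over ℝⁿ, and ‖d̃‖ ≤ r_l, ‖d̄‖ ≤ r_l, then |p̃(d̃) − p(d̄)| ≤ ε_f + ε_g·r_l + mΛ·(2ε_c + ε_J·(r_l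 + Δ)). -/

import Mathlib

noncomputable section

/-- `Vec n` is `ℝⁿ` with the Euclidean norm. -/
abbrev Vec (n : ℕ) := EuclideanSpace ℝ (Fin n)

/-- The dot product `gᵀd`. -/
def dotp {n : ℕ} (g d : Vec n) : ℝ := ∑ i, g i * d i

/-- The quadratic form `dᵀHd`. -/
def quad {n : ℕ} (H : Matrix (Fin n) (Fin n) ℝ) (d : Vec n) : ℝ :=
  ∑ i, ∑ j, d i * H i j * d j

/-- Componentwise positive part `max{u, 0}`. -/
def posv {m : ℕ} (u : Fin m → ℝ) : Fin m → ℝ := fun i => max (u i) 0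

/-- The ℓ∞ norm `‖u‖_∞ = maxᵢ |uᵢ|`. -/
def normInf {m : ℕ} (u : Fin m → ℝ) : ℝ := ⨆ i, |u i|

/-- The matrix ℓ∞ norm: maximum ℓ¹ norm of the rows. -/
def matNormInf {m n : ℕ} (M : Matrix (Fin m) (Fin n) ℝ) : ℝ := ⨆ i, ∑ j, |M i j|

/-- `min_{‖d‖ ≤ Δ} ‖max{c + Md, 0}‖_∞` over the Euclidean ball of radius `Δ`. -/
def vinf {m n : ℕ} (Δ : ℝ) (c : Fin m → ℝ) (M : Matrix (Fin m) (Fin n) ℝ) : ℝ :=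
  sInf {t | ∃ d : Vec n, ‖d‖ ≤ Δ ∧ t = normInf (posv (c + M.mulVec d))}

lemma le_normInf {m : ℕ} (u : Fin m → ℝ) (i : Fin m) : |u i| ≤ normInf u :=
  by unfold normInf; exact le_ciSup (Set.finite_range fun j => |u j|).bddAbove i

lemma normInf_nonneg' {m : ℕ} (u : Fin m → ℝ) : 0 ≤ normInf u :=
  by unfold normInf; exact Real.iSup_nonneg fun _ => abs_nonneg _

lemma normInf_le' {m : ℕ} {u : Fin m → ℝ} {B : ℝ} (hB : 0 ≤ B)
    (h : ∀ i, |u i| ≤ B) : normInf u ≤ B :=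
  by unfold normInf; exact Real.iSup_le h hB

lemma normInf_posv_mono {m : ℕ} (u v : Fin m → ℝ) (B : ℝ) (hB : 0 ≤ B)
    (h : ∀ i, |u i - v i| ≤ B) : normInf (posv u) ≤ normInf (posv v) + B := by
  apply normInf_le' (add_nonneg (normInf_nonneg' _) hB)
  intro i
  have h1 : |max (u i) 0 - max (v i) 0| ≤ |u i - v i| := abs_max_sub_max_le_abs _ _ _
  have h2 : |max (v i) 0| ≤ normInf (posv v) := le_normInf (posv v) i
  have h3 : |max (u i) 0| ≤ |max (v i) 0| + |max (u i) 0 - max (v i) 0| := by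
    calc |max (u i) 0| = |max (v i) 0 + (max (u i) 0 - max (v i) 0)| := by ring_nf
      _ ≤ _ := abs_add_le _ _
  show |max (u i) 0| ≤ _
  linarith [h i]

lemma coord_le_norm {n : ℕ} (d : Vec n) (j : Fin n) : |d j| ≤ ‖d‖ := by
  have h : ‖d‖ = Real.sqrt (∑ i, (d i) ^ 2) := by
    rw [EuclideanSpace.norm_eq]
    congr 1
    exact Finset.sum_congr rfl fun i _ => by rw [Real.norm_eq_abs, sq_abs]
  rw [h, ← Real.sqrt_sq_eq_abs]
  apply Real.sqrt_le_sqrt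
  exact Finset.single_le_sum (f := fun i => (d i) ^ 2) (fun i _ => sq_nonneg _)
    (Finset.mem_univ j)

lemma row_le_matNormInf {m n : ℕ} (M : Matrix (Fin m) (Fin n) ℝ) (i : Fin m) :
    ∑ j, |M i j| ≤ matNormInf M := by
  unfold matNormInf
  exact le_ciSup (Set.finite_range fun i => ∑ j, |M i j|).bddAbove i

lemma mulVec_coord_le {m n : ℕ} (M : Matrix (Fin m) (Fin n) ℝ) (d : Vec n) (i : Fin m) :
    |M.mulVec d i| ≤ matNormInf M * ‖d‖ := by
  have h1 : |M.mulVec d i| ≤ ∑ j, |M i j| * ‖d‖ := by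
    calc |M.mulVec d i| = |∑ j, M i j * d j| := by
          simp [Matrix.mulVec, dotProduct]
      _ ≤ ∑ j, |M i j * d j| := Finset.abs_sum_le_sum_abs _ _
      _ ≤ ∑ j, |M i j| * ‖d‖ := by
          apply Finset.sum_le_sum
          intro j _
          rw [abs_mul]
          exact mul_le_mul_of_nonneg_left (coord_le_norm d j) (abs_nonneg _)
  calc |M.mulVec d i| ≤ (∑ j, |M i j|) * ‖d‖ := by rw [Finset.sum_mul] at *; exact h1
    _ ≤ matNormInf M * ‖d‖ :=
        mul_le_mul_of_nonneg_right (row_le_matNormInf M i) (norm_nonneg d)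

lemma normInf_sub_comm {m : ℕ} (u v : Fin m → ℝ) : normInf (u - v) = normInf (v - u) := by
  unfold normInf
  exact iSup_congr fun i => by simp [abs_sub_comm]

lemma matNormInf_sub_comm {m n : ℕ} (M N : Matrix (Fin m) (Fin n) ℝ) :
    matNormInf (M - N) = matNormInf (N - M) := by
  unfold matNormInf
  exact iSup_congr fun i => Finset.sum_congr rfl fun j _ => by
    simp [Matrix.sub_apply, abs_sub_comm]

/-- One-sided comparison of the relaxation values. -/
lemma vinf_le_vinf_add {m n : ℕ} {Δ εc εJ : ℝ} (hΔ : 0 < Δ) (hεJ : 0 ≤ εJ)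
    (c ct : Fin m → ℝ) (M Mt : Matrix (Fin m) (Fin n) ℝ)
    (hc : normInf (ct - c) ≤ εc) (hM : matNormInf (Mt - M) ≤ εJ) :
    vinf Δ ct Mt ≤ vinf Δ c M + (εc + εJ * Δ) := by
  have hεc : 0 ≤ εc := le_trans (normInf_nonneg' _) hc
  have hbdd : BddBelow {t | ∃ d : Vec n, ‖d‖ ≤ Δ ∧ t = normInf (posv (ct + Mt.mulVec d))} :=
    ⟨0, by rintro t ⟨d, _, rfl⟩; exact normInf_nonneg' _⟩
  have hne : {t | ∃ d : Vec n, ‖d‖ ≤ Δ ∧ t = normInf (posv (c + M.mulVec d))}.Nonempty :=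
    ⟨_, 0, by simp [hΔ.le], rfl⟩
  rw [vinf, vinf, ← sub_le_iff_le_add]
  apply le_csInf hne
  rintro t ⟨d, hd, rfl⟩
  rw [sub_le_iff_le_add]
  have step : normInf (posv (ct + Mt.mulVec d)) ≤ normInf (posv (c + M.mulVec d)) + (εc + εJ * Δ) := by
    apply normInf_posv_mono _ _ _ (by positivity)
    intro i
    have h1 : |ct i - c i| ≤ εc := le_trans (le_normInf (ct - c) i) hc
    have h2 : |(Mt - M).mulVec d i| ≤ εJ * Δ := by
      calc |(Mt - M).mulVec d i| ≤ matNormInf (Mt - M) * ‖d‖ := mulVec_coord_le _ _ i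
        _ ≤ εJ * Δ := mul_le_mul hM hd (norm_nonneg d) hεJ
    have h3 : (ct + Mt.mulVec d) i - (c + M.mulVec d) i
        = (ct i - c i) + (Mt - M).mulVec d i := by
      rw [Matrix.sub_mulVec]
      simp [Pi.add_apply, Pi.sub_apply]
      ring
    rw [h3]
    calc |(ct i - c i) + (Mt - M).mulVec d i| ≤ |ct i - c i| + |(Mt - M).mulVec d i| :=
          abs_add_le _ _
      _ ≤ εc + εJ * Δ := add_le_add h1 h2
  calc sInf {t | ∃ d : Vec n, ‖d‖ ≤ Δ ∧ t = normInf (posv (ct + Mt.mulVec d))}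
      ≤ normInf (posv (ct + Mt.mulVec d)) := csInf_le hbdd ⟨d, hd, rfl⟩
    _ ≤ _ := step

/-- The minimal values of the noisy and exact QP exact-penalty functions differ by
at most `ε_f + ε_g·r_l + mΛ(2ε_c + ε_J(r_l + Δ))`. -/
theorem abs_penalty_min_sub_penalty_min_le
    {m n : ℕ} (Δ Λ rl εf εg εc εJ : ℝ)
    (hΔ : 0 < Δ) (hΛ : 0 < Λ) (hrl : 0 < rl)
    (hεf : 0 ≤ εf) (hεg : 0 ≤ εg) (hεc : 0 ≤ εc) (hεJ : 0 ≤ εJ)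
    (H : Matrix (Fin n) (Fin n) ℝ) (hH : H.PosDef)
    (f ft : ℝ) (g gt : Vec n) (c ct : Fin m → ℝ) (M Mt : Matrix (Fin m) (Fin n) ℝ)
    (hf : |ft - f| ≤ εf) (hg : ‖gt - g‖ ≤ εg)
    (hc : normInf (ct - c) ≤ εc) (hM : matNormInf (Mt - M) ≤ εJ)
    (ρ ρb : ℝ) (hρ : ρ = vinf Δ ct Mt) (hρb : ρb = vinf Δ c M)
    (pt p : Vec n → ℝ)
    (hpt : pt = fun d => ft + dotp gt d + (1/2) * quad H d
        + (m : ℝ) * Λ * normInf (posv (fun i => ct i + Mt.mulVec d i - ρ)))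
    (hp : p = fun d => f + dotp g d + (1/2) * quad H d
        + (m : ℝ) * Λ * normInf (posv (fun i => c i + M.mulVec d i - ρb)))
    (dt db : Vec n)
    (hdtmin : ∀ d : Vec n, pt dt ≤ pt d)
    (hdbmin : ∀ d : Vec n, p db ≤ p d)
    (hdt : ‖dt‖ ≤ rl) (hdb : ‖db‖ ≤ rl) :
    |pt dt - p db| ≤ εf + εg * rl + (m : ℝ) * Λ * (2 * εc + εJ * (rl + Δ)) := by
  have hc' : normInf (c - ct) ≤ εc := by rwa [normInf_sub_comm]
  have hM' : matNormInf (M - Mt) ≤ εJ := by rwa [matNormInf_sub_comm]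
  have hmΛ : 0 ≤ (m : ℝ) * Λ := mul_nonneg (Nat.cast_nonneg m) hΛ.le
  -- bound on |ρ - ρb|
  have hρσ : |ρ - ρb| ≤ εc + εJ * Δ := by
    rw [hρ, hρb, abs_sub_le_iff]
    constructor
    · linarith [vinf_le_vinf_add hΔ hεJ c ct M Mt hc hM]
    · linarith [vinf_le_vinf_add hΔ hεJ ct c Mt M hc' hM']
  -- key: for any d in the ball of radius rl, |pt d - p d| ≤ B
  have key : ∀ d : Vec n, ‖d‖ ≤ rl →
      |pt d - p d| ≤ εf + εg * rl + (m : ℝ) * Λ * (2 * εc + εJ * (rl + Δ)) := by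
    intro d hd
    -- dot product bound
    have hdot : |dotp gt d - dotp g d| ≤ εg * rl := by
      have e1 : dotp gt d - dotp g d = dotp (gt - g) d := by
        simp [dotp, sub_mul, Finset.sum_sub_distrib]
      have e2 : dotp (gt - g) d = inner ℝ (gt - g) d := by
        simp [dotp, PiLp.inner_apply, RCLike.inner_apply, conj_trivial, mul_comm]
      rw [e1, e2]
      calc |inner ℝ (gt - g) d| ≤ ‖gt - g‖ * ‖d‖ := abs_real_inner_le_norm _ _
        _ ≤ εg * rl := mul_le_mul hg hd (norm_nonneg d) hεg
    -- normInf bound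
    have hcoord : ∀ i, |(ct i + Mt.mulVec d i - ρ) - (c i + M.mulVec d i - ρb)|
        ≤ 2 * εc + εJ * (rl + Δ) := by
      intro i
      have h1 : |ct i - c i| ≤ εc := le_trans (le_normInf (ct - c) i) hc
      have h2 : |(Mt - M).mulVec d i| ≤ εJ * rl := by
        calc |(Mt - M).mulVec d i| ≤ matNormInf (Mt - M) * ‖d‖ := mulVec_coord_le _ _ i
          _ ≤ εJ * rl := mul_le_mul hM hd (norm_nonneg d) hεJ
      have h3 : (ct i + Mt.mulVec d i - ρ) - (c i + M.mulVec d i - ρb)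
          = (ct i - c i) + (Mt - M).mulVec d i - (ρ - ρb) := by
        rw [Matrix.sub_mulVec]
        simp [Pi.sub_apply]
        ring
      rw [h3]
      calc |(ct i - c i) + (Mt - M).mulVec d i - (ρ - ρb)|
          ≤ |(ct i - c i) + (Mt - M).mulVec d i| + |ρ - ρb| := abs_sub _ _
        _ ≤ |ct i - c i| + |(Mt - M).mulVec d i| + |ρ - ρb| := by
            linarith [abs_add_le (ct i - c i) ((Mt - M).mulVec d i)]
        _ ≤ εc + εJ * rl + (εc + εJ * Δ) := by linarith
        _ = 2 * εc + εJ * (rl + Δ) := by ring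
    have hB : (0:ℝ) ≤ 2 * εc + εJ * (rl + Δ) := by positivity
    have hN1 : normInf (posv (fun i => ct i + Mt.mulVec d i - ρ))
        ≤ normInf (posv (fun i => c i + M.mulVec d i - ρb)) + (2 * εc + εJ * (rl + Δ)) :=
      normInf_posv_mono _ _ _ hB hcoord
    have hN2 : normInf (posv (fun i => c i + M.mulVec d i - ρb))
        ≤ normInf (posv (fun i => ct i + Mt.mulVec d i - ρ)) + (2 * εc + εJ * (rl + Δ)) :=
      normInf_posv_mono _ _ _ hB fun i => by rw [abs_sub_comm]; exact hcoord i
    have hNabs : |normInf (posv (fun i => ct i + Mt.mulVec d i - ρ))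
        - normInf (posv (fun i => c i + M.mulVec d i - ρb))| ≤ 2 * εc + εJ * (rl + Δ) :=
      abs_sub_le_iff.mpr ⟨by linarith, by linarith⟩
    have expand : pt d - p d = (ft - f) + (dotp gt d - dotp g d)
        + (m : ℝ) * Λ * (normInf (posv (fun i => ct i + Mt.mulVec d i - ρ))
          - normInf (posv (fun i => c i + M.mulVec d i - ρb))) := by
      simp only [hpt, hp]
      ring
    rw [expand]
    have habs3 : |(m : ℝ) * Λ * (normInf (posv (fun i => ct i + Mt.mulVec d i - ρ))
        - normInf (posv (fun i => c i + M.mulVec d i - ρb)))|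
        ≤ (m : ℝ) * Λ * (2 * εc + εJ * (rl + Δ)) := by
      rw [abs_mul, abs_of_nonneg hmΛ]
      exact mul_le_mul_of_nonneg_left hNabs hmΛ
    calc |(ft - f) + (dotp gt d - dotp g d) + _|
        ≤ |(ft - f) + (dotp gt d - dotp g d)| + _ := abs_add_le _ _
      _ ≤ |ft - f| + |dotp gt d - dotp g d| + _ := by
          linarith [abs_add_le (ft - f) (dotp gt d - dotp g d)]
      _ ≤ εf + εg * rl + (m : ℝ) * Λ * (2 * εc + εJ * (rl + Δ)) := by
          linarith [habs3]
  have k1 := key db hdb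
  have k2 := key dt hdt
  have k1' := abs_le.mp k1
  have k2' := abs_le.mp k2
  rw [abs_sub_le_iff]
  constructor
  · linarith [hdtmin db, k1'.2]
  · linarith [hdbmin dt, k2'.1]
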